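/- arXiv:2509.24305 — 3 statements merged into one kernel-verified Lean document; each statement's English description precedes it below -/
import Mathlib

section
/- Let J : ℝ^d → ℝ be differentiable with L_g-Lipschitz gradient for some L_g > 0. Let α > 0, let θ, d ∈ ℝ^d, and set θ' = θ + α·d/‖d‖ (with the convention 0/‖0‖ = 0). Then −J(θ') ≤ −J(θ) − α‖∇J(θ)‖ + 2α‖d − ∇J(θ)‖ + L_g α²/2. -/
/-!
The descent lemma `f (x + w) ≥ f x + ⟪∇f x, w⟫ - L/2 ‖w‖²` follows by showing that
`t ↦ f (x + t w) - t ⟪∇f x, w⟫ + L t²/2 ‖w‖²` is monotone on `[0, ∞)`. For the unit direction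
`u = d/‖d‖` (or `u = 0`) one has `⟪∇f x, u⟫ ≥ ‖d‖ - ‖d - ∇f x‖ ≥ ‖∇f x‖ - 2‖d - ∇f x‖`;
taking `w = α u` with `‖w‖ ≤ α` gives the claim.
-/

open scoped RealInnerProductSpace

variable {E : Type*} [NormedAddCommGroup E] [InnerProductSpace ℝ E]

theorem norm_inv_norm_smul_le_one (d : E) : ‖‖d‖⁻¹ • d‖ ≤ 1 := by
  rcases eq_or_ne d 0 with rfl | hd
  · simp
  · exact (norm_smul_inv_norm hd).le

theorem real_inner_inv_norm_smul_self (d : E) : ⟪d, ‖d‖⁻¹ • d⟫ = ‖d‖ := by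
  rw [real_inner_smul_right, real_inner_self_eq_norm_sq]
  rcases eq_or_ne ‖d‖ 0 with h | h
  · simp [h]
  · field_simp

theorem norm_sub_two_mul_norm_sub_le_inner_inv_norm_smul (g d : E) :
    ‖g‖ - 2 * ‖d - g‖ ≤ ⟪g, ‖d‖⁻¹ • d⟫ := by
  set u := ‖d‖⁻¹ • d
  have hgd : -‖d - g‖ ≤ ⟪g - d, u⟫ := by
    have := neg_le_of_abs_le (abs_real_inner_le_norm (g - d) u)
    rw [norm_sub_rev] at this
    nlinarith [norm_inv_norm_smul_le_one d, norm_nonneg (d - g)]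
  calc ‖g‖ - 2 * ‖d - g‖ ≤ ‖d‖ - ‖d - g‖ := by
        linarith [norm_le_norm_add_norm_sub' g d, norm_sub_rev g d]
    _ ≤ ⟪d, u⟫ + ⟪g - d, u⟫ := by rw [real_inner_inv_norm_smul_self]; linarith
    _ = ⟪g, u⟫ := by rw [inner_sub_left]; ring

variable [CompleteSpace E]

theorem HasGradientAt.hasDerivAt_comp_add_smul {f : E → ℝ} {f' x w : E} {t : ℝ}
    (hf : HasGradientAt f f' (x + t • w)) :
    HasDerivAt (fun s : ℝ => f (x + s • w)) ⟪f', w⟫ t := by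
  have hline : HasDerivAt (fun s : ℝ => x + s • w) w t := by
    simpa using ((hasDerivAt_id t).smul_const w).const_add x
  simpa [Function.comp_def, InnerProductSpace.toDual_apply_apply] using
    hf.hasFDerivAt.comp_hasDerivAt t hline

theorem add_inner_gradient_sub_le_of_lipschitz_gradient {f : E → ℝ} {L : ℝ}
    (hf : Differentiable ℝ f) (hlip : ∀ x y, ‖gradient f x - gradient f y‖ ≤ L * ‖x - y‖)
    (x w : E) : f x + ⟪gradient f x, w⟫ - L / 2 * ‖w‖ ^ 2 ≤ f (x + w) := by
  set ψ : ℝ → ℝ := fun t => f (x + t • w) - t * ⟪gradient f x, w⟫ + L / 2 * t ^ 2 * ‖w‖ ^ 2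
  have hψ' : ∀ t, HasDerivAt ψ
      (⟪gradient f (x + t • w), w⟫ - ⟪gradient f x, w⟫ + L * t * ‖w‖ ^ 2) t := by
    intro t
    have := (((hf _).hasGradientAt.hasDerivAt_comp_add_smul (x := x) (w := w)).sub
      ((hasDerivAt_id t).mul_const ⟪gradient f x, w⟫)).add
      (((hasDerivAt_pow 2 t).const_mul (L / 2)).mul_const (‖w‖ ^ 2))
    exact this.congr_deriv (by simp only [Nat.add_one_sub_one, pow_one, Nat.cast_ofNat]; ring)
  have hmono : MonotoneOn ψ (Set.Ici 0) := by
    refine monotoneOn_of_hasDerivWithinAt_nonneg (convex_Ici 0)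
      (fun t _ => (hψ' t).continuousAt.continuousWithinAt)
      (fun t _ => (hψ' t).hasDerivWithinAt) fun t ht => ?_
    rw [interior_Ici, Set.mem_Ioi] at ht
    have hgrad : ‖gradient f (x + t • w) - gradient f x‖ ≤ L * t * ‖w‖ := by
      simpa [norm_smul, abs_of_pos ht, mul_assoc] using hlip (x + t • w) x
    have := neg_le_of_abs_le (abs_real_inner_le_norm (gradient f (x + t • w) - gradient f x) w)
    rw [inner_sub_left] at this
    nlinarith [mul_le_mul_of_nonneg_right hgrad (norm_nonneg w)]
  have := hmono Set.self_mem_Ici (Set.mem_Ici.2 zero_le_one) zero_le_one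
  simp only [ψ, zero_smul, one_smul, add_zero, zero_mul, sub_zero, one_mul, one_pow, mul_one,
    zero_pow two_ne_zero, mul_zero] at this
  linarith

theorem normalized_step_descent_gradient_form_general
    {dim : ℕ}
    (J : EuclideanSpace ℝ (Fin dim) → ℝ) (Lg : ℝ) (hLg : 0 < Lg)
    (hdiff : Differentiable ℝ J)
    (hlip : ∀ x y, ‖gradient J x - gradient J y‖ ≤ Lg * ‖x - y‖)
    (α : ℝ) (hα : 0 < α) (θ dvec : EuclideanSpace ℝ (Fin dim))
    (θ' : EuclideanSpace ℝ (Fin dim))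
    (hθ' : θ' = θ + α • (‖dvec‖⁻¹ • dvec)) :
    -J θ' ≤ -J θ - α * ‖gradient J θ‖ + 2 * α * ‖dvec - gradient J θ‖ + Lg * α ^ 2 / 2 := by
  subst hθ'
  set u := ‖dvec‖⁻¹ • dvec
  have hdescent := add_inner_gradient_sub_le_of_lipschitz_gradient hdiff hlip θ (α • u)
  have hinner := norm_sub_two_mul_norm_sub_le_inner_inv_norm_smul (gradient J θ) dvec
  have hu : ‖u‖ ≤ 1 := norm_inv_norm_smul_le_one dvec
  have hstep : ‖α • u‖ ^ 2 ≤ α ^ 2 := by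
    rw [norm_smul, Real.norm_of_nonneg hα.le, mul_pow]
    exact mul_le_of_le_one_right (sq_nonneg α) (pow_le_one₀ (norm_nonneg u) hu)
  rw [real_inner_smul_right] at hdescent
  nlinarith [mul_le_mul_of_nonneg_left hinner hα.le, mul_le_mul_of_nonneg_left hstep hLg.le]

/-- Descent lemma for the normalized step (Lemma 1, first form):
`−J(θ') ≤ −J(θ) − α‖∇J(θ)‖ + 2α‖d − ∇J(θ)‖ + L_g α²/2`. -/
theorem normalized_step_descent_gradient_form
    {dim : ℕ} (hdim : 0 < dim)
    (J : EuclideanSpace ℝ (Fin dim) → ℝ) (Lg : ℝ) (hLg : 0 < Lg)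
    (hdiff : Differentiable ℝ J)
    (hlip : ∀ x y, ‖gradient J x - gradient J y‖ ≤ Lg * ‖x - y‖)
    (α : ℝ) (hα : 0 < α) (θ dvec : EuclideanSpace ℝ (Fin dim))
    (θ' : EuclideanSpace ℝ (Fin dim))
    (hθ' : θ' = θ + α • (‖dvec‖⁻¹ • dvec)) :
    -J θ' ≤ -J θ - α * ‖gradient J θ‖ + 2 * α * ‖dvec - gradient J θ‖ + Lg * α ^ 2 / 2 :=
  normalized_step_descent_gradient_form_general J Lg hLg hdiff hlip α hα θ dvec θ' hθ'
end

section
/- Under the same hypotheses as the per-iterate momentum-error bound — J twice continuously differentiable with L_h-Lipschitz Hessian; F twice continuously differentiable with ‖∇F − ∇J‖ ≤ δ_g and ‖∇²F − ∇²J‖ ≤ δ_h pointwise; η ∈ (0,1], α > 0; d_0 F_0-measurable with E[‖d_0 − ∇F(θ_0)‖²] ≤ σ²/M_init; g_t F_t-measurable with E[g_t | F_{t−1}] = ∇F(θ̃_t) and E[‖g_t − ∇F(θ̃_t)‖² | F_{t−1}] ≤ σ²/M a.s.; and (θ_t, d_t) generated by the normalized momentum iteration — it holds for every T ≥ 1 that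 Σ_{t=0}^{T−1} E[‖d_t − ∇F(θ_t)‖] ≤ σ/(√M_init · η) + √η σ T/√M + 2 α² L_h T/η² + 4 δ_g T/η + 2 α δ_h T/η. -/
/-!
Write `ε t = d t - ∇F (θ t)` and `ξ t = g t - ∇F (θtilde t)`. The update of `d` gives
`ε (t + 1) = (1 - η) • ε t + η • ξ (t + 1) + Z t` with the drift
`Z t = (1 - η) • ∇F (θ t) + η • ∇F (θtilde (t + 1)) - ∇F (θ (t + 1))`. The extrapolation makes
`θ (t + 1)` the `(1 - η, η)`-barycentre of `θ t` and `θtilde (t + 1)`, so a second-order Taylor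
expansion of `∇J` and `‖∇F - ∇J‖ ≤ δg` give `‖Z t‖ ≤ Lh α² / η + 2 δg`. Unrolling the recursion,
`ε t` is `(1 - η) ^ t • ε 0` plus `η` times the damped sum `∑ (1 - η) ^ (t - s) • ξ s`, up to an
error of norm at most `‖Z‖ / η`. The increments `ξ s` are orthogonal martingale differences, so
the damped sum has second moment at most `σ² / (M η)`; Cauchy–Schwarz and the geometric series
`∑ (1 - η) ^ t ≤ 1 / η` then give the bound.
-/

open MeasureTheory Finset
open scoped RealInnerProductSpace

section Deterministic

variable {E F : Type*} [NormedAddCommGroup E] [NormedSpace ℝ E]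
  [NormedAddCommGroup F] [NormedSpace ℝ F]

lemma norm_smul_inv_norm_smul_le {α : ℝ} (hα : 0 ≤ α) (v : E) : ‖α • (‖v‖⁻¹ • v)‖ ≤ α := by
  rcases eq_or_ne v 0 with rfl | hv
  · simpa using hα
  · rw [norm_smul, norm_smul, norm_inv, norm_norm, inv_mul_cancel₀ (norm_ne_zero_iff.2 hv),
      mul_one, Real.norm_of_nonneg hα]

lemma norm_add_sub_sub_fderiv_le {G : E → F} (hG : Differentiable ℝ G) {L : ℝ} (hL : 0 ≤ L)
    (hG' : ∀ x y, ‖fderiv ℝ G x - fderiv ℝ G y‖ ≤ L * ‖x - y‖) (x u : E) :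
    ‖G (x + u) - G x - fderiv ℝ G x u‖ ≤ L * ‖u‖ ^ 2 := by
  have hmem : x + u ∈ Metric.closedBall x ‖u‖ := by simp [dist_eq_norm]
  have := (convex_closedBall x ‖u‖).norm_image_sub_le_of_norm_fderiv_le' (fun z _ => hG z)
    (fun z hz => (hG' z x).trans (mul_le_mul_of_nonneg_left (mem_closedBall_iff_norm.1 hz) hL))
    (Metric.mem_closedBall_self (norm_nonneg u)) hmem
  simpa [sq, mul_assoc] using this

/-- The first-order Taylor terms cancel. -/
lemma norm_convexComb_sub_le_of_lipschitz_fderiv {G : E → F} (hG : Differentiable ℝ G)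
    {L : ℝ} (hL : 0 ≤ L) (hG' : ∀ x y, ‖fderiv ℝ G x - fderiv ℝ G y‖ ≤ L * ‖x - y‖)
    {a b : ℝ} (ha : 0 ≤ a) (hb : 0 ≤ b) (hab : a + b = 1) {x u v : E}
    (huv : a • u + b • v = 0) :
    ‖a • G (x + u) + b • G (x + v) - G x‖ ≤ L * (a * ‖u‖ ^ 2 + b * ‖v‖ ^ 2) := by
  set D := fderiv ℝ G x
  have hsplit : a • G (x + u) + b • G (x + v) - G x =
      a • (G (x + u) - G x - D u) + b • (G (x + v) - G x - D v) + D (a • u + b • v) := by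
    obtain rfl : b = 1 - a := by linarith
    rw [map_add, map_smul, map_smul]
    module
  rw [hsplit, huv, map_zero, add_zero]
  calc ‖a • (G (x + u) - G x - D u) + b • (G (x + v) - G x - D v)‖
      ≤ a * (L * ‖u‖ ^ 2) + b * (L * ‖v‖ ^ 2) := by
        refine (norm_add_le _ _).trans (add_le_add ?_ ?_) <;>
          rw [norm_smul, Real.norm_of_nonneg ‹_›] <;> gcongr
        exacts [norm_add_sub_sub_fderiv_le hG hL hG' x u, norm_add_sub_sub_fderiv_le hG hL hG' x v]
    _ = L * (a * ‖u‖ ^ 2 + b * ‖v‖ ^ 2) := by ring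

lemma norm_convexComb_sub_sub_le {X : Type*} {G H : X → F} {δ : ℝ} (hGH : ∀ x, ‖G x - H x‖ ≤ δ)
    {a b : ℝ} (ha : 0 ≤ a) (hb : 0 ≤ b) (hab : a + b = 1) (x y z : X) :
    ‖(a • G x + b • G y - G z) - (a • H x + b • H y - H z)‖ ≤ 2 * δ := by
  have hsplit : (a • G x + b • G y - G z) - (a • H x + b • H y - H z) =
      a • (G x - H x) + b • (G y - H y) - (G z - H z) := by module
  rw [hsplit]
  calc _ ≤ a * δ + b * δ + δ := by
        refine (norm_sub_le _ _).trans (add_le_add ((norm_add_le _ _).trans (add_le_add ?_ ?_))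
          (hGH z)) <;> rw [norm_smul, Real.norm_of_nonneg ‹_›] <;> gcongr <;> exact hGH _
    _ = 2 * δ := by rw [← add_mul, hab]; ring

def dampedSum {M : Type*} [AddCommGroup M] [Module ℝ M] (a : ℝ) (ξ : ℕ → M) : ℕ → M
  | 0 => 0
  | t + 1 => a • dampedSum a ξ t + ξ (t + 1)

lemma dampedSum_apply {Ω M : Type*} [AddCommGroup M] [Module ℝ M] (a : ℝ) (ξ : ℕ → Ω → M)
    (t : ℕ) (ω : Ω) : dampedSum a ξ t ω = dampedSum a (fun s => ξ s ω) t := by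
  induction t with
  | zero => rfl
  | succ t ih => simp [dampedSum, ih]

lemma norm_sub_smul_dampedSum_sub_le {ε ξ : ℕ → E} {η c : ℝ} (hη : 0 < η) (hη1 : η ≤ 1)
    (hc : 0 ≤ c) (hε : ∀ t, ‖ε (t + 1) - (1 - η) • ε t - η • ξ (t + 1)‖ ≤ c) (t : ℕ) :
    ‖ε t - η • dampedSum (1 - η) ξ t - (1 - η) ^ t • ε 0‖ ≤ c / η := by
  induction t with
  | zero => simpa [dampedSum] using div_nonneg hc hη.le
  | succ t ih =>
    have hrec : ε (t + 1) - η • dampedSum (1 - η) ξ (t + 1) - (1 - η) ^ (t + 1) • ε 0 =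
        (1 - η) • (ε t - η • dampedSum (1 - η) ξ t - (1 - η) ^ t • ε 0) +
          (ε (t + 1) - (1 - η) • ε t - η • ξ (t + 1)) := by
      simp only [dampedSum, pow_succ]
      module
    rw [hrec]
    calc _ ≤ (1 - η) * (c / η) + c := by
          refine (norm_add_le _ _).trans (add_le_add ?_ (hε t))
          rw [norm_smul, Real.norm_of_nonneg (by linarith)]
          gcongr
      _ = c / η := by field_simp; ring

end Deterministic

lemma ContDiff.gradient {E : Type*} [NormedAddCommGroup E] [InnerProductSpace ℝ E]
    [CompleteSpace E] {f : E → ℝ} {m n : WithTop ℕ∞} (hf : ContDiff ℝ n f) (hmn : m + 1 ≤ n) :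
    ContDiff ℝ m (gradient f) :=
  (InnerProductSpace.toDual ℝ E).symm.contDiff.comp (hf.fderiv_right hmn)

section Probability

variable {Ω E : Type*} {m0 : MeasurableSpace Ω} {μ : Measure Ω} [NormedAddCommGroup E]

lemma integral_norm_le_sqrt_integral_norm_sq [IsProbabilityMeasure μ] {f : Ω → E}
    (hf : MemLp f 2 μ) : ∫ ω, ‖f ω‖ ∂μ ≤ √(∫ ω, ‖f ω‖ ^ 2 ∂μ) := by
  refine Real.le_sqrt_of_sq_le ?_
  have h := ProbabilityTheory.variance_nonneg (fun ω => ‖f ω‖) μ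
  rw [ProbabilityTheory.variance_eq_sub hf.norm] at h
  simpa using h

lemma MeasureTheory.StronglyMeasurable.inv_norm_smul [NormedSpace ℝ E] {m : MeasurableSpace Ω}
    {v : Ω → E} (hv : StronglyMeasurable v) : StronglyMeasurable fun ω => ‖v ω‖⁻¹ • v ω :=
  hv.norm.measurable.inv.stronglyMeasurable.smul hv

lemma memLp_comp_of_norm_sub_le [IsFiniteMeasure μ] [ProperSpace E] {F : Type*}
    [NormedAddCommGroup F] {G : E → F} (hG : Continuous G) {X : Ω → E}
    (hX : AEStronglyMeasurable X μ) {x₀ : E} {R : ℝ} (hXR : ∀ ω, ‖X ω - x₀‖ ≤ R)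
    (p : ENNReal) : MemLp (fun ω => G (X ω)) p μ := by
  obtain ⟨C, hC⟩ := (isCompact_closedBall x₀ R).exists_bound_of_continuousOn hG.continuousOn
  exact MemLp.of_bound (hG.comp_aestronglyMeasurable hX) C
    (ae_of_all _ fun ω => hC _ (mem_closedBall_iff_norm.2 (hXR ω)))

lemma condExp_sub_ae_eq_zero [NormedSpace ℝ E] [CompleteSpace E] [IsFiniteMeasure μ]
    {m : MeasurableSpace Ω} (hm : m ≤ m0) {f h : Ω → E} (hf : Integrable f μ)
    (hh : StronglyMeasurable[m] h) (hhi : Integrable h μ) (hfh : μ[f|m] =ᵐ[μ] h) :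
    μ[f - h|m] =ᵐ[μ] 0 := by
  filter_upwards [condExp_sub hf hhi m, hfh] with ω hω hω'
  rw [hω, Pi.sub_apply, condExp_of_stronglyMeasurable hm hh hhi, hω', Pi.zero_apply, sub_self]

lemma integral_le_of_condExp_le_const [IsProbabilityMeasure μ] {m : MeasurableSpace Ω}
    (hm : m ≤ m0) {f : Ω → ℝ} {c : ℝ} (hf : μ[f|m] ≤ᵐ[μ] fun _ => c) : ∫ ω, f ω ∂μ ≤ c := by
  rw [← integral_condExp hm]
  simpa using integral_mono_ae integrable_condExp (integrable_const c) hf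

variable [InnerProductSpace ℝ E]

lemma integrable_inner_of_memLp {f g : Ω → E} (hf : MemLp f 2 μ) (hg : MemLp g 2 μ) :
    Integrable (fun ω => ⟪f ω, g ω⟫) μ :=
  (hf.norm.integrable_mul hg.norm).mono' (hf.1.inner hg.1)
    (ae_of_all _ fun ω => norm_inner_le_norm (f ω) (g ω))

lemma integral_inner_eq_zero_of_condExp_eq_zero [CompleteSpace E] [IsFiniteMeasure μ]
    {m : MeasurableSpace Ω} (hm : m ≤ m0) {X ξ : Ω → E} (hX : StronglyMeasurable[m] X)
    (hXL2 : MemLp X 2 μ) (hξL2 : MemLp ξ 2 μ) (hξ : μ[ξ|m] =ᵐ[μ] 0) :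
    ∫ ω, ⟪X ω, ξ ω⟫ ∂μ = 0 := by
  have hpull : μ[fun ω => ⟪X ω, ξ ω⟫|m] =ᵐ[μ] fun ω => ⟪X ω, μ[ξ|m] ω⟫ :=
    condExp_bilin_of_stronglyMeasurable_left (innerSL ℝ (E := E) : E →L[ℝ] E →L[ℝ] ℝ) hX
      (integrable_inner_of_memLp hXL2 hξL2) (hξL2.integrable one_le_two)
  rw [← integral_condExp hm]
  refine integral_eq_zero_of_ae ?_
  filter_upwards [hpull, hξ] with ω hω hω'
  simpa [hω'] using hω

lemma integral_norm_smul_add_sq {X Y : Ω → E} (hX : MemLp X 2 μ) (hY : MemLp Y 2 μ)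
    (hXY : ∫ ω, ⟪X ω, Y ω⟫ ∂μ = 0) (a : ℝ) :
    ∫ ω, ‖a • X ω + Y ω‖ ^ 2 ∂μ = a ^ 2 * ∫ ω, ‖X ω‖ ^ 2 ∂μ + ∫ ω, ‖Y ω‖ ^ 2 ∂μ := by
  have hX2 := (memLp_two_iff_integrable_sq_norm hX.1).1 hX
  have hY2 := (memLp_two_iff_integrable_sq_norm hY.1).1 hY
  have hXY2 := integrable_inner_of_memLp hX hY
  have hexpand : ∀ ω, ‖a • X ω + Y ω‖ ^ 2 =
      a ^ 2 * ‖X ω‖ ^ 2 + 2 * a * ⟪X ω, Y ω⟫ + ‖Y ω‖ ^ 2 := fun ω => by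
    rw [norm_add_sq_real, norm_smul, real_inner_smul_left, mul_pow, Real.norm_eq_abs, sq_abs]
    ring
  have hsum : Integrable (fun ω => a ^ 2 * ‖X ω‖ ^ 2 + 2 * a * ⟪X ω, Y ω⟫) μ :=
    (hX2.const_mul _).add (hXY2.const_mul _)
  simp_rw [hexpand]
  rw [integral_add hsum hY2,
    integral_add (hX2.const_mul _) (hXY2.const_mul _), integral_const_mul, integral_const_mul,
    hXY, mul_zero, add_zero]

lemma stronglyMeasurable_dampedSum {ℱ : Filtration ℕ m0} {ξ : ℕ → Ω → E} (a : ℝ)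
    (hξ : ∀ t, StronglyMeasurable[ℱ (t + 1)] (ξ (t + 1))) (t : ℕ) :
    StronglyMeasurable[ℱ t] (dampedSum a ξ t) := by
  induction t with
  | zero => exact stronglyMeasurable_const
  | succ t ih => exact ((ih.mono (ℱ.mono t.le_succ)).const_smul a).add (hξ t)

lemma memLp_dampedSum {ξ : ℕ → Ω → E} {p : ENNReal} (a : ℝ) (hξ : ∀ t, MemLp (ξ (t + 1)) p μ)
    (t : ℕ) : MemLp (dampedSum a ξ t) p μ := by
  induction t with
  | zero => exact MemLp.zero
  | succ t ih => exact (ih.const_smul a).add (hξ t)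

/-- Indexed from `1`: `ξ 0` plays no role. -/
structure IsMartingaleDiffBoundedVariance (μ : Measure Ω) (ℱ : Filtration ℕ m0)
    (ξ : ℕ → Ω → E) (v : ℝ) : Prop where
  stronglyMeasurable : ∀ t, StronglyMeasurable[ℱ (t + 1)] (ξ (t + 1))
  memLp : ∀ t, MemLp (ξ (t + 1)) 2 μ
  condExp_ae_eq_zero : ∀ t, μ[ξ (t + 1)|ℱ t] =ᵐ[μ] 0
  integral_norm_sq_le : ∀ t, ∫ ω, ‖ξ (t + 1) ω‖ ^ 2 ∂μ ≤ v

lemma isMartingaleDiffBoundedVariance_sub [CompleteSpace E] [IsProbabilityMeasure μ]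
    {ℱ : Filtration ℕ m0} {f g : ℕ → Ω → E} {v : ℝ}
    (hf : ∀ t, StronglyMeasurable[ℱ (t + 1)] (f (t + 1))) (hfL2 : ∀ t, MemLp (f (t + 1)) 2 μ)
    (hg : ∀ t, StronglyMeasurable[ℱ t] (g (t + 1))) (hgL2 : ∀ t, MemLp (g (t + 1)) 2 μ)
    (hmean : ∀ t, μ[f (t + 1)|ℱ t] =ᵐ[μ] g (t + 1))
    (hvar : ∀ t, μ[fun ω => ‖f (t + 1) ω - g (t + 1) ω‖ ^ 2|ℱ t] ≤ᵐ[μ] fun _ => v) :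
    IsMartingaleDiffBoundedVariance μ ℱ (fun t ω => f t ω - g t ω) v where
  stronglyMeasurable t := (hf t).sub ((hg t).mono (ℱ.mono t.le_succ))
  memLp t := (hfL2 t).sub (hgL2 t)
  condExp_ae_eq_zero t := condExp_sub_ae_eq_zero (ℱ.le t) ((hfL2 t).integrable one_le_two) (hg t)
    ((hgL2 t).integrable one_le_two) (hmean t)
  integral_norm_sq_le t := integral_le_of_condExp_le_const (ℱ.le t) (hvar t)

namespace IsMartingaleDiffBoundedVariance

variable {ℱ : Filtration ℕ m0} {ξ : ℕ → Ω → E} {v : ℝ}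
  (hξ : IsMartingaleDiffBoundedVariance μ ℱ ξ v)
include hξ

lemma nonneg : 0 ≤ v :=
  (integral_nonneg fun _ => sq_nonneg _).trans (hξ.integral_norm_sq_le 0)

variable [CompleteSpace E] [IsProbabilityMeasure μ]

lemma integral_norm_sq_dampedSum_le {a w : ℝ} (hw : 0 ≤ w) (hvw : a ^ 2 * w + v ≤ w)
    (t : ℕ) : ∫ ω, ‖dampedSum a ξ t ω‖ ^ 2 ∂μ ≤ w := by
  induction t with
  | zero => simpa [dampedSum] using hw
  | succ t ih =>
    have hL2 := memLp_dampedSum a hξ.memLp t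
    have horth := integral_inner_eq_zero_of_condExp_eq_zero (ℱ.le t)
      (stronglyMeasurable_dampedSum a hξ.stronglyMeasurable t) hL2 (hξ.memLp t)
      (hξ.condExp_ae_eq_zero t)
    calc ∫ ω, ‖dampedSum a ξ (t + 1) ω‖ ^ 2 ∂μ
        = a ^ 2 * ∫ ω, ‖dampedSum a ξ t ω‖ ^ 2 ∂μ + ∫ ω, ‖ξ (t + 1) ω‖ ^ 2 ∂μ :=
          integral_norm_smul_add_sq hL2 (hξ.memLp t) horth a
      _ ≤ a ^ 2 * w + v :=
          add_le_add (mul_le_mul_of_nonneg_left ih (sq_nonneg a)) (hξ.integral_norm_sq_le t)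
      _ ≤ w := hvw

lemma mul_integral_norm_dampedSum_le {η : ℝ} (hη : 0 < η) (hη1 : η ≤ 1) (t : ℕ) :
    η * ∫ ω, ‖dampedSum (1 - η) ξ t ω‖ ∂μ ≤ √(η * v) := by
  have hv := hξ.nonneg
  have hsq := hξ.integral_norm_sq_dampedSum_le (div_nonneg hv hη.le) (a := 1 - η) (by
    have : (1 - η) ^ 2 * (v / η) + v = v / η - v * (1 - η) := by field_simp; ring
    nlinarith) t
  calc η * ∫ ω, ‖dampedSum (1 - η) ξ t ω‖ ∂μ ≤ η * √(v / η) := by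
        gcongr
        exact (integral_norm_le_sqrt_integral_norm_sq (memLp_dampedSum _ hξ.memLp t)).trans
          (Real.sqrt_le_sqrt hsq)
    _ = √(η * v) := by
        rw [show η * v = η ^ 2 * (v / η) by field_simp, Real.sqrt_mul (sq_nonneg η),
          Real.sqrt_sq hη.le]

lemma integral_norm_le_of_perturbed_damped_recursion {ε : ℕ → Ω → E} {η c : ℝ} (hη : 0 < η)
    (hη1 : η ≤ 1) (hc : 0 ≤ c)
    (hε : ∀ t ω, ‖ε (t + 1) ω - (1 - η) • ε t ω - η • ξ (t + 1) ω‖ ≤ c)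
    (hε0 : Integrable (ε 0) μ) (t : ℕ) :
    ∫ ω, ‖ε t ω‖ ∂μ ≤ √(η * v) + (1 - η) ^ t * ∫ ω, ‖ε 0 ω‖ ∂μ + c / η := by
  set m := dampedSum (1 - η) ξ t
  have hm : Integrable (fun ω => ‖m ω‖) μ :=
    ((memLp_dampedSum _ hξ.memLp t).integrable one_le_two).norm
  have hpt : ∀ ω, ‖ε t ω‖ ≤ η * ‖m ω‖ + (1 - η) ^ t * ‖ε 0 ω‖ + c / η := fun ω => by
    have hres := norm_sub_smul_dampedSum_sub_le (ε := (ε · ω)) (ξ := (ξ · ω)) hη hη1 hc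
      (fun t => hε t ω) t
    rw [← dampedSum_apply] at hres
    calc ‖ε t ω‖
        = ‖(ε t ω - η • m ω - (1 - η) ^ t • ε 0 ω) + η • m ω + (1 - η) ^ t • ε 0 ω‖ := by
          congr 1; abel
      _ ≤ c / η + η * ‖m ω‖ + (1 - η) ^ t * ‖ε 0 ω‖ := by
          refine (norm_add₃_le ..).trans (add_le_add_three hres ?_ ?_) <;>
            rw [norm_smul, Real.norm_of_nonneg (by have := hη1; positivity)]
      _ = η * ‖m ω‖ + (1 - η) ^ t * ‖ε 0 ω‖ + c / η := by ring
  have hsum : Integrable (fun ω => η * ‖m ω‖ + (1 - η) ^ t * ‖ε 0 ω‖) μ :=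
    (hm.const_mul _).add (hε0.norm.const_mul _)
  calc ∫ ω, ‖ε t ω‖ ∂μ ≤ ∫ ω, (η * ‖m ω‖ + (1 - η) ^ t * ‖ε 0 ω‖ + c / η) ∂μ :=
        integral_mono_of_nonneg (ae_of_all _ fun _ => norm_nonneg _)
          (hsum.add (integrable_const _)) (ae_of_all _ hpt)
    _ = η * ∫ ω, ‖m ω‖ ∂μ + (1 - η) ^ t * ∫ ω, ‖ε 0 ω‖ ∂μ + c / η := by
        rw [integral_add hsum (integrable_const _),
          integral_add (hm.const_mul _) (hε0.norm.const_mul _), integral_const_mul,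
          integral_const_mul, integral_const, probReal_univ, one_smul]
    _ ≤ √(η * v) + (1 - η) ^ t * ∫ ω, ‖ε 0 ω‖ ∂μ + c / η := by
        gcongr
        exact hξ.mul_integral_norm_dampedSum_le hη hη1 t

lemma sum_integral_norm_le_of_perturbed_damped_recursion {ε : ℕ → Ω → E} {η c v₀ : ℝ}
    (hη : 0 < η) (hη1 : η ≤ 1) (hc : 0 ≤ c)
    (hε : ∀ t ω, ‖ε (t + 1) ω - (1 - η) • ε t ω - η • ξ (t + 1) ω‖ ≤ c)
    (hε0 : MemLp (ε 0) 2 μ) (hε0var : ∫ ω, ‖ε 0 ω‖ ^ 2 ∂μ ≤ v₀) (T : ℕ) :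
    ∑ t ∈ range T, ∫ ω, ‖ε t ω‖ ∂μ ≤ T * √(η * v) + √v₀ / η + T * (c / η) := by
  have hgeom : ∑ t ∈ range T, (1 - η) ^ t ≤ 1 / η := by
    simpa using geom_sum_Ico_le_of_lt_one (sub_nonneg.2 hη1) (by linarith) (m := 0) (n := T)
  have hinit : ∫ ω, ‖ε 0 ω‖ ∂μ ≤ √v₀ :=
    (integral_norm_le_sqrt_integral_norm_sq hε0).trans (Real.sqrt_le_sqrt hε0var)
  calc ∑ t ∈ range T, ∫ ω, ‖ε t ω‖ ∂μ
      ≤ ∑ t ∈ range T, (√(η * v) + (1 - η) ^ t * ∫ ω, ‖ε 0 ω‖ ∂μ + c / η) :=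
        sum_le_sum fun t _ => hξ.integral_norm_le_of_perturbed_damped_recursion hη hη1 hc hε
          (hε0.integrable one_le_two) t
    _ = T * √(η * v) + (∑ t ∈ range T, (1 - η) ^ t) * ∫ ω, ‖ε 0 ω‖ ∂μ + T * (c / η) := by
        rw [sum_add_distrib, sum_add_distrib, ← sum_mul]
        simp
    _ ≤ T * √(η * v) + 1 / η * √v₀ + T * (c / η) := by
        gcongr
    _ = T * √(η * v) + √v₀ / η + T * (c / η) := by ring

end IsMartingaleDiffBoundedVariance

end Probability

section Momentum

variable {E : Type*} [NormedAddCommGroup E] [NormedSpace ℝ E]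

structure IsNormalizedMomentum (η α : ℝ) (θ θtilde d g : ℕ → E) : Prop where
  θ_succ : ∀ t, θ (t + 1) = θ t + α • (‖d t‖⁻¹ • d t)
  θtilde_succ : ∀ t, θtilde (t + 1) = θ (t + 1) + ((1 - η) / η) • (θ (t + 1) - θ t)
  d_succ : ∀ t, d (t + 1) = (1 - η) • d t + η • g (t + 1)

namespace IsNormalizedMomentum

variable {η α : ℝ} {θ θtilde d g : ℕ → E} (h : IsNormalizedMomentum η α θ θtilde d g)
include h

lemma norm_step_le (hα : 0 ≤ α) (t : ℕ) : ‖θ (t + 1) - θ t‖ ≤ α := by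
  rw [h.θ_succ, add_sub_cancel_left]
  exact norm_smul_inv_norm_smul_le hα _

lemma norm_sub_zero_le (hα : 0 ≤ α) (t : ℕ) : ‖θ t - θ 0‖ ≤ α * t := by
  rw [← dist_eq_norm, dist_comm]
  simpa [mul_comm] using dist_le_range_sum_of_dist_le (f := θ) t (d := fun _ => α)
    fun {k} _ => by rw [dist_comm, dist_eq_norm]; exact h.norm_step_le hα k

lemma norm_θtilde_sub_zero_le (hη : 0 < η) (hη1 : η ≤ 1) (hα : 0 ≤ α) (t : ℕ) :
    ‖θtilde (t + 1) - θ 0‖ ≤ α * (t + 1) + (1 - η) / η * α := by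
  have hρ : 0 ≤ (1 - η) / η := div_nonneg (by linarith) hη.le
  rw [h.θtilde_succ, add_sub_right_comm]
  refine (norm_add_le _ _).trans (add_le_add ?_ ?_)
  · exact_mod_cast h.norm_sub_zero_le hα (t + 1)
  · rw [norm_smul, Real.norm_of_nonneg hρ]
    exact mul_le_mul_of_nonneg_left (h.norm_step_le hα t) hρ

lemma error_succ_sub (G : E → E) (t : ℕ) :
    (d (t + 1) - G (θ (t + 1))) - (1 - η) • (d t - G (θ t))
        - η • (g (t + 1) - G (θtilde (t + 1))) =
      (1 - η) • G (θ t) + η • G (θtilde (t + 1)) - G (θ (t + 1)) := by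
  rw [h.d_succ]
  module

/-- `θ (t + 1)` is the `(1 - η, η)`-barycentre of `θ t` and `θtilde (t + 1)`, so only
second-order terms survive. -/
lemma norm_drift_le {G H : E → E} (hH : Differentiable ℝ H) {L δ : ℝ} (hL : 0 ≤ L)
    (hH' : ∀ x y, ‖fderiv ℝ H x - fderiv ℝ H y‖ ≤ L * ‖x - y‖) (hGH : ∀ x, ‖G x - H x‖ ≤ δ)
    (hη : 0 < η) (hη1 : η ≤ 1) (hα : 0 ≤ α) (t : ℕ) :
    ‖(1 - η) • G (θ t) + η • G (θtilde (t + 1)) - G (θ (t + 1))‖ ≤ L * α ^ 2 / η + 2 * δ := by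
  set x := θ (t + 1)
  set u := θ t - x
  set ρ := (1 - η) / η
  have hρ : 0 ≤ ρ := div_nonneg (by linarith) hη.le
  have hθ : θ t = x + u := by simp [u]
  have hθtilde : θtilde (t + 1) = x + -(ρ • u) := by
    rw [h.θtilde_succ]; simp only [u]; module
  have huv : (1 - η) • u + η • -(ρ • u) = 0 := by
    rw [smul_neg, smul_smul, mul_div_cancel₀ _ hη.ne', sub_eq_add_neg, add_neg_cancel]
  have hu : ‖u‖ ≤ α := by rw [norm_sub_rev]; exact h.norm_step_le hα t
  have hHdrift := norm_convexComb_sub_le_of_lipschitz_fderiv hH hL hH' (sub_nonneg.2 hη1) hη.le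
    (by ring) (x := x) huv
  have hGdrift := norm_convexComb_sub_sub_le hGH (sub_nonneg.2 hη1) hη.le (by ring)
    (x + u) (x + -(ρ • u)) x
  have hquad : (1 - η) * ‖u‖ ^ 2 + η * ‖-(ρ • u)‖ ^ 2 ≤ α ^ 2 / η := by
    rw [norm_neg, norm_smul, Real.norm_of_nonneg hρ]
    calc (1 - η) * ‖u‖ ^ 2 + η * (ρ * ‖u‖) ^ 2 = (1 - η) / η * ‖u‖ ^ 2 := by
          simp only [ρ]; field_simp; ring
      _ ≤ 1 / η * α ^ 2 := by gcongr; linarith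
      _ = α ^ 2 / η := by ring
  rw [hθ, hθtilde]
  calc _ ≤ ‖(1 - η) • H (x + u) + η • H (x + -(ρ • u)) - H x‖ + 2 * δ := by
        exact (norm_le_insert' _ _).trans (add_le_add_right hGdrift _)
    _ ≤ L * α ^ 2 / η + 2 * δ := by
        gcongr
        calc _ ≤ L * ((1 - η) * ‖u‖ ^ 2 + η * ‖-(ρ • u)‖ ^ 2) := hHdrift
          _ ≤ L * (α ^ 2 / η) := by gcongr
          _ = L * α ^ 2 / η := by ring

end IsNormalizedMomentum

end Momentum

lemma IsNormalizedMomentum.stronglyMeasurable_θtilde_succ {Ω E : Type*}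
    {m0 : MeasurableSpace Ω} [NormedAddCommGroup E] [NormedSpace ℝ E] {ℱ : Filtration ℕ m0}
    {η α : ℝ} {θ θtilde d g : ℕ → Ω → E}
    (h : ∀ ω, IsNormalizedMomentum η α (θ · ω) (θtilde · ω) (d · ω) (g · ω))
    (hθ0 : StronglyMeasurable[ℱ 0] (θ 0)) (hd0 : StronglyMeasurable[ℱ 0] (d 0))
    (hg : ∀ t, StronglyMeasurable[ℱ (t + 1)] (g (t + 1))) (t : ℕ) :
    StronglyMeasurable[ℱ t] (θtilde (t + 1)) := by
  have hd : ∀ t, StronglyMeasurable[ℱ t] (d t) := by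
    intro t
    induction t with
    | zero => exact hd0
    | succ t ih =>
      rw [show d (t + 1) = fun ω => (1 - η) • d t ω + η • g (t + 1) ω from
        funext fun ω => (h ω).d_succ t]
      exact ((ih.mono (ℱ.mono t.le_succ)).const_smul _).add ((hg t).const_smul _)
  have hstep : ∀ t, StronglyMeasurable[ℱ t] (θ t) → StronglyMeasurable[ℱ t] (θ (t + 1)) := by
    intro t hθt
    rw [show θ (t + 1) = fun ω => θ t ω + α • (‖d t ω‖⁻¹ • d t ω) from
      funext fun ω => (h ω).θ_succ t]
    exact hθt.add ((hd t).inv_norm_smul.const_smul α)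
  have hθ : ∀ t, StronglyMeasurable[ℱ t] (θ t) ∧ StronglyMeasurable[ℱ t] (θ (t + 1)) := by
    intro t
    induction t with
    | zero => exact ⟨hθ0, hstep 0 hθ0⟩
    | succ t ih =>
      have hθt := ih.2.mono (ℱ.mono t.le_succ)
      exact ⟨hθt, hstep _ hθt⟩
  rw [show θtilde (t + 1) = fun ω => θ (t + 1) ω + ((1 - η) / η) • (θ (t + 1) ω - θ t ω) from
    funext fun ω => (h ω).θtilde_succ t]
  exact (hθ t).2.add (((hθ t).2.sub (hθ t).1).const_smul _)

theorem momentum_error_summed_bound_general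
    {dim : ℕ}
    {Ω : Type*} [m0 : MeasurableSpace Ω]
    (μ : Measure Ω) [IsProbabilityMeasure μ]
    (ℱ : Filtration ℕ m0)
    (J F : EuclideanSpace ℝ (Fin dim) → ℝ)
    (Lh δg δh η α σ : ℝ) (Minit M : ℕ)
    (hLh : 0 < Lh) (hδg : 0 ≤ δg) (hδh : 0 ≤ δh)
    (hη : 0 < η) (hη1 : η ≤ 1) (hα : 0 < α) (hσ : 0 ≤ σ)
    (hJ : ContDiff ℝ 2 J)
    (hJhess : ∀ x y, ‖fderiv ℝ (gradient J) x - fderiv ℝ (gradient J) y‖ ≤ Lh * ‖x - y‖)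
    (hF : ContDiff ℝ 2 F)
    (hFg : ∀ θ, ‖gradient F θ - gradient J θ‖ ≤ δg)
    (θ0 : EuclideanSpace ℝ (Fin dim))
    (θ θtilde d g : ℕ → Ω → EuclideanSpace ℝ (Fin dim))
    -- the normalized momentum iteration
    (hθzero : ∀ ω, θ 0 ω = θ0)
    (hθone : ∀ ω, θ 1 ω = θ0 + α • (‖d 0 ω‖⁻¹ • d 0 ω))
    (htilde : ∀ t, 1 ≤ t → ∀ ω,
      θtilde t ω = θ t ω + ((1 - η) / η) • (θ t ω - θ (t - 1) ω))
    (hdrec : ∀ t, 1 ≤ t → ∀ ω, d t ω = (1 - η) • d (t - 1) ω + η • g t ω)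
    (hθrec : ∀ t, 1 ≤ t → ∀ ω, θ (t + 1) ω = θ t ω + α • (‖d t ω‖⁻¹ • d t ω))
    -- stochastic assumptions
    (hd0meas : StronglyMeasurable[ℱ 0] (d 0))
    (hd0L2 : MemLp (d 0) 2 μ)
    (hd0var : ∫ ω, ‖d 0 ω - gradient F θ0‖ ^ 2 ∂μ ≤ σ ^ 2 / Minit)
    (hgmeas : ∀ t, 1 ≤ t → StronglyMeasurable[ℱ t] (g t))
    (hgL2 : ∀ t, 1 ≤ t → MemLp (g t) 2 μ)
    (hgmean : ∀ t, 1 ≤ t → μ[g t | ℱ (t - 1)] =ᵐ[μ] fun ω => gradient F (θtilde t ω))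
    (hgvar : ∀ t, 1 ≤ t →
      μ[fun ω => ‖g t ω - gradient F (θtilde t ω)‖ ^ 2 | ℱ (t - 1)]
        ≤ᵐ[μ] fun _ => σ ^ 2 / M) :
    ∀ T : ℕ, 1 ≤ T →
      ∑ t ∈ Finset.range T, ∫ ω, ‖d t ω - gradient F (θ t ω)‖ ∂μ ≤
        σ / (Real.sqrt Minit * η) + Real.sqrt η * σ * T / Real.sqrt M
          + 2 * α ^ 2 * Lh * T / η ^ 2 + 4 * δg * T / η + 2 * α * δh * T / η := by
  intro T _
  have hmom : ∀ ω, IsNormalizedMomentum η α (θ · ω) (θtilde · ω) (d · ω) (g · ω) := fun ω =>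
    { θ_succ := fun t => by
        cases t with
        | zero => simp only [hθzero, hθone]
        | succ t => exact hθrec _ t.succ_pos ω
      θtilde_succ := fun t => htilde _ t.succ_pos ω
      d_succ := fun t => hdrec _ t.succ_pos ω }
  have hgradF : Continuous (gradient F) := (hF.gradient (m := 1) (by norm_num)).continuous
  have hθtilde t : StronglyMeasurable[ℱ t] (θtilde (t + 1)) :=
    IsNormalizedMomentum.stronglyMeasurable_θtilde_succ hmom
      (by simp only [funext hθzero]; exact stronglyMeasurable_const) hd0meas
      (fun t => hgmeas _ t.succ_pos) t
  have hnoise := isMartingaleDiffBoundedVariance_sub (g := fun t ω => gradient F (θtilde t ω))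
    (fun t => hgmeas _ t.succ_pos)
    (fun t => hgL2 _ t.succ_pos) (fun t => hgradF.comp_stronglyMeasurable (hθtilde t))
    (fun t => memLp_comp_of_norm_sub_le hgradF ((hθtilde t).mono (ℱ.le t)).aestronglyMeasurable
      (fun ω => by simpa only [hθzero] using (hmom ω).norm_θtilde_sub_zero_le hη hη1 hα.le t) 2)
    (fun t => hgmean _ t.succ_pos) (fun t => hgvar _ t.succ_pos)
  have hJ' : Differentiable ℝ (gradient J) :=
    (hJ.gradient (m := 1) (by norm_num)).differentiable one_ne_zero
  have hdrift t ω : ‖(d (t + 1) ω - gradient F (θ (t + 1) ω))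
      - (1 - η) • (d t ω - gradient F (θ t ω))
      - η • (g (t + 1) ω - gradient F (θtilde (t + 1) ω))‖ ≤ Lh * α ^ 2 / η + 2 * δg := by
    rw [(hmom ω).error_succ_sub]
    exact (hmom ω).norm_drift_le hJ' hLh.le hJhess hFg hη hη1 hα.le t
  calc _ ≤ T * √(η * (σ ^ 2 / M)) + √(σ ^ 2 / Minit) / η
        + T * ((Lh * α ^ 2 / η + 2 * δg) / η) :=
        hnoise.sum_integral_norm_le_of_perturbed_damped_recursion
          (ε := fun t ω => d t ω - gradient F (θ t ω)) hη hη1 (by positivity) hdrift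
          (by simp only [hθzero]; exact hd0L2.sub (memLp_const _))
          (by simpa only [hθzero] using hd0var) T
    _ ≤ _ := by
        rw [Real.sqrt_mul hη.le, Real.sqrt_div' _ (Nat.cast_nonneg _),
          Real.sqrt_div' _ (Nat.cast_nonneg _), Real.sqrt_sq hσ, ← sub_nonneg]
        have hslack : 0 ≤ α ^ 2 * Lh * T / η ^ 2 + 2 * δg * T / η + 2 * α * δh * T / η := by
          positivity
        linear_combination hslack

/-- Summed bound on the momentum error of the normalized momentum iteration
(Lemma 3, summed form): for every `T ≥ 1`,
`Σ_{t=0}^{T−1} E[‖d_t − ∇F(θ_t)‖] ≤ σ/(√M_init η) + √η σ T/√M + 2 α² L_h T/η²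
  + 4 δ_g T/η + 2 α δ_h T/η`. -/
theorem momentum_error_summed_bound
    {dim : ℕ} (hdim : 0 < dim)
    {Ω : Type*} [m0 : MeasurableSpace Ω]
    (μ : Measure Ω) [IsProbabilityMeasure μ]
    (ℱ : Filtration ℕ m0)
    (J F : EuclideanSpace ℝ (Fin dim) → ℝ)
    (Lh δg δh η α σ : ℝ) (Minit M : ℕ)
    (hLh : 0 < Lh) (hδg : 0 ≤ δg) (hδh : 0 ≤ δh)
    (hη : 0 < η) (hη1 : η ≤ 1) (hα : 0 < α) (hσ : 0 ≤ σ)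
    (hMinit : 1 ≤ Minit) (hM : 1 ≤ M)
    (hJ : ContDiff ℝ 2 J)
    (hJhess : ∀ x y, ‖fderiv ℝ (gradient J) x - fderiv ℝ (gradient J) y‖ ≤ Lh * ‖x - y‖)
    (hF : ContDiff ℝ 2 F)
    (hFg : ∀ θ, ‖gradient F θ - gradient J θ‖ ≤ δg)
    (hFh : ∀ θ, ‖fderiv ℝ (gradient F) θ - fderiv ℝ (gradient J) θ‖ ≤ δh)
    (θ0 : EuclideanSpace ℝ (Fin dim))
    (θ θtilde d g : ℕ → Ω → EuclideanSpace ℝ (Fin dim))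
    -- the normalized momentum iteration
    (hθzero : ∀ ω, θ 0 ω = θ0)
    (hθone : ∀ ω, θ 1 ω = θ0 + α • (‖d 0 ω‖⁻¹ • d 0 ω))
    (htilde : ∀ t, 1 ≤ t → ∀ ω,
      θtilde t ω = θ t ω + ((1 - η) / η) • (θ t ω - θ (t - 1) ω))
    (hdrec : ∀ t, 1 ≤ t → ∀ ω, d t ω = (1 - η) • d (t - 1) ω + η • g t ω)
    (hθrec : ∀ t, 1 ≤ t → ∀ ω, θ (t + 1) ω = θ t ω + α • (‖d t ω‖⁻¹ • d t ω))
    -- stochastic assumptions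
    (hd0meas : StronglyMeasurable[ℱ 0] (d 0))
    (hd0L2 : MemLp (d 0) 2 μ)
    (hd0var : ∫ ω, ‖d 0 ω - gradient F θ0‖ ^ 2 ∂μ ≤ σ ^ 2 / Minit)
    (hgmeas : ∀ t, 1 ≤ t → StronglyMeasurable[ℱ t] (g t))
    (hgL2 : ∀ t, 1 ≤ t → MemLp (g t) 2 μ)
    (hgmean : ∀ t, 1 ≤ t → μ[g t | ℱ (t - 1)] =ᵐ[μ] fun ω => gradient F (θtilde t ω))
    (hgvar : ∀ t, 1 ≤ t →
      μ[fun ω => ‖g t ω - gradient F (θtilde t ω)‖ ^ 2 | ℱ (t - 1)]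
        ≤ᵐ[μ] fun _ => σ ^ 2 / M) :
    ∀ T : ℕ, 1 ≤ T →
      ∑ t ∈ Finset.range T, ∫ ω, ‖d t ω - gradient F (θ t ω)‖ ∂μ ≤
        σ / (Real.sqrt Minit * η) + Real.sqrt η * σ * T / Real.sqrt M
          + 2 * α ^ 2 * Lh * T / η ^ 2 + 4 * δg * T / η + 2 * α * δh * T / η :=
  momentum_error_summed_bound_general (m0 := m0) μ ℱ J F Lh δg δh η α σ Minit M hLh hδg hδh hη hη1
    hα hσ hJ hJhess hF hFg θ0 θ θtilde d g hθzero hθone htilde hdrec hθrec hd0meas hd0L2 hd0var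
    hgmeas hgL2 hgmean hgvar
end

section
/- Let n ≥ 1 and let 0 < h_1 ≤ h_2 ≤ ⋯ ≤ h_n be real numbers, and let M ≥ 1 be an integer. Define t = min_{m ∈ {1,…,n}} [(Σ_{i=1}^m 1/h_i)^{−1} (M + m)]. Then Σ_{i=1}^n ⌊t/h_i⌋ ≥ M. (This shows that if each of n parallel workers produces one item every h_i seconds, then after t seconds at least M items have been produced in total.) -/
/-- Lemma (Rennala collection time): with `n` parallel workers where worker `i`
produces one item every `h_i` seconds (`h_1 ≤ ⋯ ≤ h_n`), by time
`t = min_{m ∈ [n]} (Σ_{i=1}^m 1/h_i)⁻¹ (M + m)` at least `M` items are produced. -/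
theorem rennala_collection_time
    (n : ℕ) (hn : 1 ≤ n) (h : ℕ → ℝ)
    (hpos : ∀ i ∈ Finset.Icc 1 n, 0 < h i)
    (hmono : ∀ i j, 1 ≤ i → i ≤ j → j ≤ n → h i ≤ h j)
    (M : ℕ) (hM : 1 ≤ M)
    (t : ℝ)
    (ht : t = (Finset.Icc 1 n).inf' (Finset.nonempty_Icc.mpr hn)
      (fun m => (∑ i ∈ Finset.Icc 1 m, (h i)⁻¹)⁻¹ * ((M : ℝ) + (m : ℝ)))) :
    (M : ℤ) ≤ ∑ i ∈ Finset.Icc 1 n, ⌊t / h i⌋ := by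
  obtain ⟨m, hm, hmt⟩ := Finset.exists_mem_eq_inf' (Finset.nonempty_Icc.mpr hn)
    (fun m => (∑ i ∈ Finset.Icc 1 m, (h i)⁻¹)⁻¹ * ((M : ℝ) + (m : ℝ)))
  rw [hmt] at ht
  obtain ⟨hm1, hmn⟩ := Finset.mem_Icc.mp hm
  have hsub : Finset.Icc 1 m ⊆ Finset.Icc 1 n := Finset.Icc_subset_Icc_right hmn
  have hposm : ∀ i ∈ Finset.Icc 1 m, 0 < h i := fun i hi => hpos i (hsub hi)
  have hS : 0 < ∑ i ∈ Finset.Icc 1 m, (h i)⁻¹ :=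
    Finset.sum_pos (fun i hi => inv_pos.mpr (hposm i hi)) (Finset.nonempty_Icc.mpr hm1)
  have ht0 : 0 < t := by
    rw [ht]
    have : 0 < (M : ℝ) + (m : ℝ) := by positivity
    positivity
  have hsum : ∑ i ∈ Finset.Icc 1 m, t / h i = (M : ℝ) + (m : ℝ) := by
    have : ∑ i ∈ Finset.Icc 1 m, t / h i = t * ∑ i ∈ Finset.Icc 1 m, (h i)⁻¹ := by
      rw [Finset.mul_sum]; exact Finset.sum_congr rfl fun i _ => div_eq_mul_inv t (h i)
    rw [this, ht, mul_comm, ← mul_assoc, mul_inv_cancel₀ hS.ne', one_mul]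
  have key : (M : ℝ) ≤ ∑ i ∈ Finset.Icc 1 m, (⌊t / h i⌋ : ℝ) := by
    have h1 : ∀ i ∈ Finset.Icc 1 m, t / h i - 1 ≤ (⌊t / h i⌋ : ℝ) :=
      fun i hi => le_of_lt (Int.sub_one_lt_floor _)
    calc (M : ℝ) = ∑ i ∈ Finset.Icc 1 m, (t / h i - 1) := by
          rw [Finset.sum_sub_distrib, hsum]
          simp [Nat.card_Icc]
      _ ≤ _ := Finset.sum_le_sum h1
  have keyZ : (M : ℤ) ≤ ∑ i ∈ Finset.Icc 1 m, ⌊t / h i⌋ := by exact_mod_cast key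
  refine keyZ.trans (Finset.sum_le_sum_of_subset_of_nonneg hsub ?_)
  intro i hi _
  exact Int.floor_nonneg.mpr (div_nonneg ht0.le (hpos i hi).le)
end
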